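/- arXiv:1608.03996 — 5 statements merged into one kernel-verified Lean document; each statement's English description precedes it below -/
import Mathlib

section
/- Let A be a unital associative algebra over ℂ, let L : A → A be a Lie derivation, and let p ∈ A be an idempotent (p² = p). Then for every x ∈ A the identity x·(p·L(p) + L(p)·p + p·L(p)·p − L(p)) − (p·L(p) + L(p)·p + p·L(p)·p − L(p))·x = 3·p·x·(p·L(p) + L(p)·p − L(p)) − 3·(p·L(p) + L(p)·p − L(p))·x·p holds. -/
/-- Lemma 2 of the paper (identity (3.2)): for a Lie derivation `L` on a unital
associative complex algebra `A` and an idempotent `p`, the stated commutator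
identity holds for every `x ∈ A`. -/
theorem lie_derivation_idempotent_identity
    {A : Type*} [Ring A] [Algebra ℂ A]
    (L : A →ₗ[ℂ] A)
    (hL : ∀ x y : A, L (x * y - y * x) =
      (L x * y - y * L x) + (x * L y - L y * x))
    (p : A) (hp : p * p = p) (x : A) :
    x * (p * L p + L p * p + p * L p * p - L p)
      - (p * L p + L p * p + p * L p * p - L p) * x
    = 3 * (p * x * (p * L p + L p * p - L p))
      - 3 * ((p * L p + L p * p - L p) * x * p) := by
  have h2 : ∀ t : A, p * (p * t) = p * t := fun t => by rw [← mul_assoc, hp]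
  have trip : ∀ z : A,
      p * (p * (p * z - z * p) - (p * z - z * p) * p)
        - (p * (p * z - z * p) - (p * z - z * p) * p) * p
      = p * z - z * p := by
    intro z
    simp only [mul_sub, sub_mul, mul_assoc, h2, hp]
    abel
  have e1 := hL p x
  have e2 := hL p (p * x - x * p)
  have e3 := hL p (p * (p * x - x * p) - (p * x - x * p) * p)
  rw [trip x] at e3
  rw [e2] at e3
  rw [e1] at e3
  -- e3 is now an equation between expressions in p, L p, x, L x.
  have main :
      (x * (p * L p + L p * p + p * L p * p - L p)
        - (p * L p + L p * p + p * L p * p - L p) * x)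
      - (3 * (p * x * (p * L p + L p * p - L p))
        - 3 * ((p * L p + L p * p - L p) * x * p))
      = (L p * x - x * L p + (p * L x - L x * p))
        - ((L p * (p * (p * x - x * p) - (p * x - x * p) * p)
              - (p * (p * x - x * p) - (p * x - x * p) * p) * L p)
            + (p * (L p * (p * x - x * p) - (p * x - x * p) * L p
                    + (p * (L p * x - x * L p + (p * L x - L x * p))
                      - (L p * x - x * L p + (p * L x - L x * p)) * p))
              - (L p * (p * x - x * p) - (p * x - x * p) * L p
                    + (p * (L p * x - x * L p + (p * L x - L x * p))
                      - (L p * x - x * L p + (p * L x - L x * p)) * p)) * p)) := by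
    simp only [mul_sub, sub_mul, mul_add, add_mul, mul_assoc, h2, hp]
    noncomm_ring
  exact sub_eq_zero.mp (main.trans (sub_eq_zero.mpr e3))
end

section
/- Let A be a unital associative algebra over ℂ, let L : A → A be a Lie derivation, and let p ∈ A be an idempotent. Set a = p·L(p)·p and c = (1−p)·L(p)·(1−p). Then for every x ∈ A the identity x·(2a − c) − (2a − c)·x = 3·p·x·(a − c) − 3·(a − c)·x·p holds. -/
/-- For a Lie derivation `L` on a unital associative complex algebra `A` and an
idempotent `p`, with `a = p·L(p)·p` and `c = (1−p)·L(p)·(1−p)`, the identity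
`x(2a−c) − (2a−c)x = 3px(a−c) − 3(a−c)xp` holds for every `x`. -/
theorem lie_derivation_corner_identity
    {A : Type*} [Ring A] [Algebra ℂ A]
    (L : A →ₗ[ℂ] A)
    (hL : ∀ x y : A, L (x * y - y * x) =
      (L x * y - y * L x) + (x * L y - L y * x))
    (p : A) (hp : p * p = p)
    (a c : A) (ha : a = p * L p * p) (hc : c = (1 - p) * L p * (1 - p))
    (x : A) :
    x * (2 * a - c) - (2 * a - c) * x
      = 3 * (p * x * (a - c)) - 3 * ((a - c) * x * p) := by
  have hp1 : ∀ t : A, p * (p * t) = p * t := fun t => by rw [← mul_assoc, hp]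
  set d := L p with hd
  set u := p * x - x * p with hu
  set v := p * u - u * p with hv
  -- ad_p^3 = ad_p
  have hw : p * v - v * p = u := by
    rw [hv, hu]
    simp only [two_mul, mul_add, add_mul, mul_sub, sub_mul, mul_assoc, hp1, hp, one_mul, mul_one]
    noncomm_ring
  have A1 : L u = (d * x - x * d) + (p * L x - L x * p) := hL p x
  have A2 : L v = (d * u - u * d) + (p * L u - L u * p) := hL p u
  have A3 : L u = (d * v - v * d) + (p * L v - L v * p) := by
    have h := hL p v
    rwa [hw] at h
  set D1 := d * x - x * d with hD1
  set D2 := d * u - u * d with hD2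
  set D3 := d * v - v * d with hD3
  -- the fundamental identity obtained by eliminating L x, L u, L v
  have hS : D1 - p * D1 - D1 * p + 2 * (p * (D1 * p)) - (D3 + (p * D2 - D2 * p)) = 0 := by
    have E := A3
    rw [A2] at E
    rw [A1] at E
    rw [← sub_eq_zero_of_eq E]
    simp only [hD1, hD2, hD3, hv, hu]
    simp only [two_mul, mul_add, add_mul, mul_sub, sub_mul, mul_assoc, hp1, hp, one_mul, mul_one]
    noncomm_ring
  -- a + c commutes with x
  have h2K : 2 * ((a + c) * x - x * (a + c)) =
      2 * (p * ((D1 - p * D1 - D1 * p + 2 * (p * (D1 * p)) - (D3 + (p * D2 - D2 * p))) * p))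
      - p * ((D1 - p * D1 - D1 * p + 2 * (p * (D1 * p)) - (D3 + (p * D2 - D2 * p))) * (1 - p))
      - (1 - p) * ((D1 - p * D1 - D1 * p + 2 * (p * (D1 * p)) - (D3 + (p * D2 - D2 * p))) * p)
      + 2 * ((1 - p) * ((D1 - p * D1 - D1 * p + 2 * (p * (D1 * p)) - (D3 + (p * D2 - D2 * p))) * (1 - p))) := by
    rw [ha, hc]
    simp only [hD1, hD2, hD3, hv, hu]
    simp only [two_mul, mul_add, add_mul, mul_sub, sub_mul, mul_assoc, hp1, hp, one_mul, mul_one]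
    noncomm_ring
  rw [hS] at h2K
  simp only [zero_mul, mul_zero, sub_zero, add_zero] at h2K
  have hK : (a + c) * x - x * (a + c) = 0 := by
    have h2' : ((2 : ℂ)⁻¹ * 2) • ((a + c) * x - x * (a + c)) = 0 := by
      rw [mul_smul, two_smul, ← two_mul, h2K, smul_zero]
    rwa [inv_mul_cancel₀ (by norm_num : (2 : ℂ) ≠ 0), one_smul] at h2'
  -- the four corner consequences
  have z1 : c * x - (x * a + x * c - a * x) = 0 := by
    have h : c * x - (x * a + x * c - a * x) = (a + c) * x - x * (a + c) := by noncomm_ring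
    rw [h, hK]
  have z2 : a * x - (p * (x * a) + p * (x * c)) = 0 := by
    have h : a * x - (p * (x * a) + p * (x * c)) = p * ((a + c) * x - x * (a + c)) := by
      rw [ha, hc]
      simp only [two_mul, mul_add, add_mul, mul_sub, sub_mul, mul_assoc, hp1, hp, one_mul, mul_one]
      noncomm_ring
    rw [h, hK, mul_zero]
  have z3 : x * a - (a * (x * p) + c * (x * p)) = 0 := by
    have h : x * a - (a * (x * p) + c * (x * p)) = -(((a + c) * x - x * (a + c)) * p) := by
      rw [ha, hc]
      simp only [two_mul, mul_add, add_mul, mul_sub, sub_mul, mul_assoc, hp1, hp, one_mul, mul_one]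
      noncomm_ring
    rw [h, hK, zero_mul, neg_zero]
  have z4 : a * (x * p) - p * (x * a) = 0 := by
    have h : a * (x * p) - p * (x * a) = p * (((a + c) * x - x * (a + c)) * p) := by
      rw [ha, hc]
      simp only [two_mul, mul_add, add_mul, mul_sub, sub_mul, mul_assoc, hp1, hp, one_mul, mul_one]
      noncomm_ring
    rw [h, hK, zero_mul, mul_zero]
  -- combine
  have comb : (x * (2 * a - c) - (2 * a - c) * x)
      - (3 * (p * x * (a - c)) - 3 * ((a - c) * x * p))
      = (c * x - (x * a + x * c - a * x))
        - 3 * (a * x - (p * (x * a) + p * (x * c)))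
        + 3 * (x * a - (a * (x * p) + c * (x * p)))
        + 6 * (a * (x * p) - p * (x * a)) := by noncomm_ring
  rw [z1, z2, z3, z4] at comb
  simp only [mul_zero, sub_zero, add_zero] at comb
  exact sub_eq_zero.mp comb
end

section
/- Let A be a unital associative algebra over ℂ, let L : A → A be a Lie derivation, and let p ∈ A be an idempotent. Set a = p·L(p)·p and c = (1−p)·L(p)·(1−p). If x ∈ A satisfies p·x = x and x·p = 0, then a·x = x·c and hence (a + c)·x = x·(a + c); if x ∈ A satisfies p·x = 0 and x·p = x, then c·x = x·a and hence (a + c)·x = x·(a + c). -/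
private lemma corner1 {A : Type*} [Ring A] [Algebra ℂ A]
    (L : A →ₗ[ℂ] A)
    (hL : ∀ x y : A, L (x * y - y * x) =
      (L x * y - y * L x) + (x * L y - L y * x))
    (p : A) (hp : p * p = p)
    (x : A) (hx1 : p * x = x) (hx2 : x * p = 0) :
    p * L p * x = x * L p - x * L p * p := by
  have hp' : ∀ y : A, y * p * p = y * p := fun y => by rw [mul_assoc, hp]
  have hx2' : ∀ y : A, y * x * p = 0 := fun y => by rw [mul_assoc, hx2, mul_zero]
  have key : L x = (L p * x - x * L p) + (p * L x - L x * p) := by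
    have h := hL p x
    rw [hx1, hx2, sub_zero] at h
    exact h
  have e := congrArg (fun z => p * z * p) key
  have e1 := congrArg (fun z => p * z) key
  simp only [mul_add, mul_sub, add_mul, sub_mul, ← mul_assoc, hp, hx1, hx2, hp', hx2',
    zero_mul, mul_zero, sub_zero, zero_sub, add_zero, zero_add] at e e1
  rw [← sub_eq_zero]
  have h2 : p * L p * x - (x * L p - x * L p * p) =
      (p * L p * x - x * L p + (p * L x - p * L x * p) - p * L x)
      - (-(x * L p * p) + (p * L x * p - p * L x * p) - p * L x * p) := by abel
  rw [h2, ← e1, ← e]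
  abel

private lemma corner2 {A : Type*} [Ring A] [Algebra ℂ A]
    (L : A →ₗ[ℂ] A)
    (hL : ∀ x y : A, L (x * y - y * x) =
      (L x * y - y * L x) + (x * L y - L y * x))
    (p : A) (hp : p * p = p)
    (x : A) (hx1 : p * x = 0) (hx2 : x * p = x) :
    L p * x - p * L p * x = x * L p * p := by
  have hp' : ∀ y : A, y * p * p = y * p := fun y => by rw [mul_assoc, hp]
  have hx2' : ∀ y : A, y * x * p = y * x := fun y => by rw [mul_assoc, hx2]
  have key : -(L x) = (L p * x - x * L p) + (p * L x - L x * p) := by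
    have h := hL p x
    rw [hx1, hx2, zero_sub, map_neg] at h
    exact h
  have e := congrArg (fun z => z * p) key
  have e1 := congrArg (fun z => p * z * p) key
  simp only [mul_add, mul_sub, add_mul, sub_mul, neg_mul, mul_neg, ← mul_assoc, hp, hx1, hx2,
    hp', hx2', zero_mul, mul_zero, sub_zero, zero_sub, add_zero, zero_add, sub_self] at e e1
  rw [← sub_eq_zero]
  have h2 : L p * x - p * L p * x - x * L p * p =
      ((L p * x - x * L p * p + (p * L x * p - L x * p)) - (-(L x * p)))
      - (p * L p * x - (-(p * L x * p))) := by abel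
  rw [h2, ← e, ← e1]
  abel

/-- For a Lie derivation `L` on a unital associative complex algebra `A` and an
idempotent `p`, with `a = p·L(p)·p` and `c = (1−p)·L(p)·(1−p)`: if `x` lies in
the corner `pA(1−p)` then `a·x = x·c` and `(a+c)·x = x·(a+c)`; if `x` lies in
the corner `(1−p)Ap` then `c·x = x·a` and `(a+c)·x = x·(a+c)`. -/
theorem lie_derivation_diagonal_commutes_offdiagonal
    {A : Type*} [Ring A] [Algebra ℂ A]
    (L : A →ₗ[ℂ] A)
    (hL : ∀ x y : A, L (x * y - y * x) =
      (L x * y - y * L x) + (x * L y - L y * x))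
    (p : A) (hp : p * p = p)
    (a c : A) (ha : a = p * L p * p) (hc : c = (1 - p) * L p * (1 - p))
    (x : A) :
    ((p * x = x ∧ x * p = 0) → a * x = x * c ∧ (a + c) * x = x * (a + c)) ∧
    ((p * x = 0 ∧ x * p = x) → c * x = x * a ∧ (a + c) * x = x * (a + c)) := by
  subst ha hc
  constructor
  · rintro ⟨hx1, hx2⟩
    have hp' : ∀ y : A, y * p * p = y * p := fun y => by rw [mul_assoc, hp]
    have hx1' : ∀ y : A, y * p * x = y * x := fun y => by rw [mul_assoc, hx1]
    have hx2' : ∀ y : A, y * x * p = 0 := fun y => by rw [mul_assoc, hx2, mul_zero]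
    have main := corner1 L hL p hp x hx1 hx2
    have hax : p * L p * p * x = x * ((1 - p) * L p * (1 - p)) := by
      simp only [mul_sub, sub_mul, mul_one, one_mul, ← mul_assoc, hx1', hx2, hx2',
        zero_mul, mul_zero, sub_zero, zero_sub, sub_self]
      exact main
    refine ⟨hax, ?_⟩
    have hcx : (1 - p) * L p * (1 - p) * x = 0 := by
      simp only [mul_sub, sub_mul, mul_one, one_mul, ← mul_assoc, hp, hx1', hp']
      abel
    have hxa : x * (p * L p * p) = 0 := by
      rw [← mul_assoc, ← mul_assoc, hx2, zero_mul, zero_mul]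
    rw [add_mul, mul_add, hax, hcx, hxa, add_zero, zero_add]
  · rintro ⟨hx1, hx2⟩
    have hp' : ∀ y : A, y * p * p = y * p := fun y => by rw [mul_assoc, hp]
    have hx1' : ∀ y : A, y * p * x = 0 := fun y => by rw [mul_assoc, hx1, mul_zero]
    have hx2' : ∀ y : A, y * x * p = y * x := fun y => by rw [mul_assoc, hx2]
    have main := corner2 L hL p hp x hx1 hx2
    have hcx : (1 - p) * L p * (1 - p) * x = x * (p * L p * p) := by
      simp only [mul_sub, sub_mul, mul_one, one_mul, ← mul_assoc, hx1', hx2, hx2', hp',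
        zero_mul, mul_zero, sub_zero, zero_sub, add_zero, sub_self]
      exact main
    refine ⟨hcx, ?_⟩
    have hax : p * L p * p * x = 0 := by
      rw [mul_assoc, hx1, mul_zero]
    have hxc : x * ((1 - p) * L p * (1 - p)) = 0 := by
      simp only [mul_sub, sub_mul, mul_one, one_mul, ← mul_assoc, hx2, hx2', hp']
      abel
    rw [add_mul, mul_add, hcx, hax, hxc, add_zero, zero_add]
end

section
/- Let A be a unital associative algebra over ℂ, let p ∈ A be an idempotent, and let L : A → A be a Lie derivation such that L(p) lies in the center Z(A). If x ∈ A satisfies p·x = x and x·p = 0, then p·L(x) = L(x) and L(x)·p = 0 (so L(x) = p·L(x)·(1−p)); if x ∈ A satisfies p·x = 0 and x·p = x, then L(x)·p = L(x) and p·L(x) = 0 (so L(x) = (1−p)·L(x)·p). -/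
private lemma half_cancel {A : Type*} [Ring A] [Algebra ℂ A] (a : A)
    (h : a + a = 0) : a = 0 := by
  have h2 : (2 : ℂ) • a = 0 := by rw [two_smul]; exact h
  simpa using smul_eq_zero.mp h2

/-- Lemma 4 of the paper: if `L` is a Lie derivation on a unital associative
complex algebra `A`, `p` is an idempotent, and `L(p)` is central, then `L`
preserves the off-diagonal corners `pA(1−p)` and `(1−p)Ap`. -/
theorem lie_derivation_preserves_offdiagonal_corners
    {A : Type*} [Ring A] [Algebra ℂ A]
    (L : A →ₗ[ℂ] A)
    (hL : ∀ x y : A, L (x * y - y * x) =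
      (L x * y - y * L x) + (x * L y - L y * x))
    (p : A) (hp : p * p = p)
    (hLp : ∀ y : A, L p * y = y * L p)
    (x : A) :
    ((p * x = x ∧ x * p = 0) →
      (p * L x = L x ∧ L x * p = 0 ∧ L x = p * L x * (1 - p))) ∧
    ((p * x = 0 ∧ x * p = x) →
      (L x * p = L x ∧ p * L x = 0 ∧ L x = (1 - p) * L x * p)) := by
  constructor
  · rintro ⟨h1, h2⟩
    have key : L x = p * L x - L x * p := by
      have := hL p x
      rwa [h1, h2, sub_zero, hLp x, sub_self, zero_add] at this
    have hp1 : p * L x * p = 0 := by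
      have h := congrArg (fun a => p * a) key
      simp only [mul_sub, ← mul_assoc, hp] at h
      exact sub_eq_self.mp h.symm
    have hp2 : L x * p = 0 := by
      have h := congrArg (fun a => a * p) key
      simp only [sub_mul, mul_assoc, hp] at h
      rw [← mul_assoc, hp1, zero_sub] at h
      exact half_cancel _ (eq_neg_iff_add_eq_zero.mp h)
    have hp3 : p * L x = L x := by
      nth_rewrite 2 [key]
      rw [hp2, sub_zero]
    refine ⟨hp3, hp2, ?_⟩
    rw [mul_sub, mul_one, hp3, hp2, sub_zero]
  · rintro ⟨h1, h2⟩
    have key : L x = L x * p - p * L x := by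
      have := hL p x
      rw [h1, h2, zero_sub, hLp x, sub_self, zero_add, map_neg,
        neg_eq_iff_eq_neg, neg_sub] at this
      exact this
    have hp1 : p * L x * p = 0 := by
      have h := congrArg (fun a => a * p) key
      simp only [sub_mul, mul_assoc, hp] at h
      have h' := sub_eq_self.mp h.symm
      rwa [← mul_assoc] at h'
    have hp2 : p * L x = 0 := by
      have h := congrArg (fun a => p * a) key
      simp only [mul_sub, ← mul_assoc, hp] at h
      rw [hp1, zero_sub] at h
      exact half_cancel _ (eq_neg_iff_add_eq_zero.mp h)
    have hp3 : L x * p = L x := by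
      nth_rewrite 2 [key]
      rw [hp2, sub_zero]
    refine ⟨hp3, hp2, ?_⟩
    rw [sub_mul, one_mul, sub_mul, mul_assoc, hp3, hp2, sub_zero]
end

section
/- Let A be a unital associative algebra over ℂ, let p ∈ A be an idempotent, and let L : A → A be a Lie derivation such that L(p) lies in the center Z(A). If x ∈ A satisfies x = p·x·p and y ∈ A satisfies y = (1−p)·y·(1−p), then the element (1−p)·L(x)·(1−p) commutes with y, and the element p·L(y)·p commutes with x. -/
/-- Part of Lemma 5 of the paper: if `L` is a Lie derivation on a unital
associative complex algebra `A`, `p` is an idempotent with `L(p)` central,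
`x = p·x·p` and `y = (1−p)·y·(1−p)`, then `(1−p)·L(x)·(1−p)` commutes with `y`
and `p·L(y)·p` commutes with `x`. -/
theorem lie_derivation_diagonal_components_commute
    {A : Type*} [Ring A] [Algebra ℂ A]
    (L : A →ₗ[ℂ] A)
    (hL : ∀ x y : A, L (x * y - y * x) =
      (L x * y - y * L x) + (x * L y - L y * x))
    (p : A) (hp : p * p = p)
    (hLp : ∀ y : A, L p * y = y * L p)
    (x y : A) (hx : x = p * x * p) (hy : y = (1 - p) * y * (1 - p)) :
    ((1 - p) * L x * (1 - p)) * y = y * ((1 - p) * L x * (1 - p)) ∧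
    (p * L y * p) * x = x * (p * L y * p) := by
  have hq : p * (1 - p) = 0 := by rw [mul_sub, mul_one, hp, sub_self]
  have hq' : (1 - p) * p = 0 := by rw [sub_mul, one_mul, hp, sub_self]
  have hpx : p * x = x := by
    nth_rewrite 1 [hx]
    rw [← mul_assoc, ← mul_assoc, hp, ← hx]
  have hxp : x * p = x := by
    nth_rewrite 1 [hx]
    rw [mul_assoc, hp, ← hx]
  have hpy : p * y = 0 := by
    nth_rewrite 1 [hy]
    rw [← mul_assoc, ← mul_assoc, hq, zero_mul, zero_mul]
  have hyp : y * p = 0 := by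
    nth_rewrite 1 [hy]
    rw [mul_assoc, hq', mul_zero]
  have h1 : p * L x = L x * p := by
    have h := hL p x
    rw [hpx, hxp, sub_self, map_zero, hLp x, sub_self, zero_add] at h
    exact sub_eq_zero.mp h.symm
  have h2 : p * L y = L y * p := by
    have h := hL p y
    rw [hpy, hyp, sub_self, map_zero, hLp y, sub_self, zero_add] at h
    exact sub_eq_zero.mp h.symm
  have hxy : x * y = 0 := by rw [← hxp, mul_assoc, hpy, mul_zero]
  have hyx : y * x = 0 := by rw [← hpx, ← mul_assoc, hyp, zero_mul]
  have h0 : (L x * y - y * L x) + (x * L y - L y * x) = 0 := by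
    have h := hL x y
    rw [hxy, hyx, sub_zero, map_zero] at h
    exact h.symm
  have hcd : L x * y - y * L x = L y * x - x * L y := by
    have h := eq_neg_of_add_eq_zero_left h0
    rw [neg_sub] at h
    exact h
  have hpc : p * (L x * y - y * L x) = 0 := by
    rw [mul_sub, ← mul_assoc, h1, mul_assoc, hpy, mul_zero, ← mul_assoc, hpy,
      zero_mul, sub_self]
  have hpd : p * (L y * x - x * L y) = L y * x - x * L y := by
    rw [mul_sub, ← mul_assoc, h2, mul_assoc, hpx, ← mul_assoc, hpx]
  have hc0 : L x * y - y * L x = 0 := by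
    rw [hcd, ← hpd, ← hcd, hpc]
  have hd0 : L y * x - x * L y = 0 := by rw [← hcd, hc0]
  have h1y : (1 - p) * y = y := by rw [sub_mul, one_mul, hpy, sub_zero]
  have hy1 : y * (1 - p) = y := by rw [mul_sub, mul_one, hyp, sub_zero]
  constructor
  · have hA : ((1 - p) * L x * (1 - p)) * y = L x * y := by
      rw [mul_assoc, h1y, mul_assoc, sub_mul, one_mul, ← mul_assoc, h1,
        mul_assoc, hpy, mul_zero, sub_zero]
    have hB : y * ((1 - p) * L x * (1 - p)) = y * L x := by
      rw [← mul_assoc, ← mul_assoc, hy1, mul_sub, mul_one, mul_assoc, ← h1,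
        ← mul_assoc, hyp, zero_mul, sub_zero]
    rw [hA, hB, ← sub_eq_zero]
    exact hc0
  · have hC : (p * L y * p) * x = L y * x := by
      rw [mul_assoc, hpx, h2, mul_assoc, hpx]
    have hD : x * (p * L y * p) = x * L y := by
      rw [← mul_assoc, ← mul_assoc, hxp, mul_assoc, ← h2, ← mul_assoc, hxp]
    rw [hC, hD, ← sub_eq_zero]
    exact hd0
end
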